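/- Let K be a convex body in ℝ^n with 0 ∈ int K. Then the linear span of the set of support functions of convex bodies homothetic to Minkowski summands of the polar body K° equals the space L±(‖·‖_K) = {g | ∃ε>0 : ‖·‖_K + εg and ‖·‖_K - εg are sublinear}. In particular these spaces have the same dimension. -/

import Mathlib

noncomputable section
open scoped RealInnerProductSpace Pointwise

/-- A function is positively homogeneous if `f (c • x) = c * f x` for all `c ≥ 0`. -/
def PosHomog {n : ℕ} (f : EuclideanSpace ℝ (Fin n) → ℝ) : Prop :=
  ∀ c : ℝ, 0 ≤ c → ∀ x, f (c • x) = c * f x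

/-- A function is sublinear if it is positively homogeneous and convex. -/
def Sublinear {n : ℕ} (f : EuclideanSpace ℝ (Fin n) → ℝ) : Prop :=
  PosHomog f ∧ ConvexOn ℝ Set.univ f

/-- The support function of a set. -/
def suppFn {n : ℕ} (K : Set (EuclideanSpace ℝ (Fin n))) (x : EuclideanSpace ℝ (Fin n)) : ℝ :=
  sSup ((fun y => ⟪y, x⟫) '' K)

/-- The polar body of a set. -/
def polarBody {n : ℕ} (K : Set (EuclideanSpace ℝ (Fin n))) : Set (EuclideanSpace ℝ (Fin n)) :=
  {y | ∀ x ∈ K, ⟪x, y⟫ ≤ 1}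

/-- A convex body: a nonempty compact convex set. -/
def IsBody {n : ℕ} (K : Set (EuclideanSpace ℝ (Fin n))) : Prop :=
  IsCompact K ∧ Convex ℝ K ∧ K.Nonempty

/-- `L` is homothetic to a Minkowski summand of `Q`, i.e. `L` belongs to the cone `S(Q)`. -/
def InSummandCone {n : ℕ} (Q L : Set (EuclideanSpace ℝ (Fin n))) : Prop :=
  IsBody L ∧ ∃ r > (0 : ℝ), ∃ v : EuclideanSpace ℝ (Fin n),
    ∃ M : Set (EuclideanSpace ℝ (Fin n)), IsBody M ∧ Q = (r • L + {v}) + M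

namespace Stmt3Aux

variable {n : ℕ}

local notation "E" => EuclideanSpace ℝ (Fin n)

lemma inner_right_cont (x : E) : Continuous (fun y : E => ⟪y, x⟫) :=
  continuous_id.inner continuous_const

lemma bddAbove_img {A : Set E} (hA : IsCompact A) (x : E) :
    BddAbove ((fun y => ⟪y, x⟫) '' A) :=
  (hA.image (inner_right_cont x)).bddAbove

lemma le_suppFn {A : Set E} (hA : IsCompact A) {y : E} (hy : y ∈ A) (x : E) :
    ⟪y, x⟫ ≤ suppFn A x :=
  le_csSup (bddAbove_img hA x) ⟨y, hy, rfl⟩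

lemma suppFn_le {A : Set E} (hA : A.Nonempty) {x : E} {c : ℝ}
    (h : ∀ y ∈ A, ⟪y, x⟫ ≤ c) : suppFn A x ≤ c :=
  csSup_le (hA.image _) (by rintro _ ⟨y, hy, rfl⟩; exact h y hy)

lemma isBody_add {A B : Set E} (hA : IsBody A) (hB : IsBody B) : IsBody (A + B) :=
  ⟨hA.1.add hB.1, hA.2.1.add hB.2.1, hA.2.2.add hB.2.2⟩

lemma isBody_smul {A : Set E} (hA : IsBody A) (r : ℝ) : IsBody (r • A) := by
  refine ⟨?_, hA.2.1.smul r, hA.2.2.smul_set⟩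
  have : r • A = (fun y : E => r • y) '' A := by
    ext z; simp [Set.mem_smul_set]
  rw [this]
  exact hA.1.image (continuous_const_smul r)

lemma isBody_singleton (v : E) : IsBody ({v} : Set E) :=
  ⟨isCompact_singleton, convex_singleton v, ⟨v, rfl⟩⟩

lemma suppFn_add {A B : Set E} (hA : IsBody A) (hB : IsBody B) (x : E) :
    suppFn (A + B) x = suppFn A x + suppFn B x := by
  have hAB : IsCompact (A + B) := hA.1.add hB.1
  apply le_antisymm
  · apply suppFn_le (hA.2.2.add hB.2.2)
    rintro y hy
    rcases Set.mem_add.1 hy with ⟨a, ha, b, hb, rfl⟩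
    rw [inner_add_left]
    exact add_le_add (le_suppFn hA.1 ha x) (le_suppFn hB.1 hb x)
  · have h1 : ∀ a ∈ A, ⟪a, x⟫ ≤ suppFn (A + B) x - suppFn B x := by
      intro a ha
      have h2 : suppFn B x ≤ suppFn (A + B) x - ⟪a, x⟫ := by
        apply suppFn_le hB.2.2
        intro b hb
        have h3 : ⟪a + b, x⟫ ≤ suppFn (A + B) x :=
          le_suppFn hAB (Set.add_mem_add ha hb) x
        rw [inner_add_left] at h3; linarith
      linarith
    have := suppFn_le hA.2.2 h1
    linarith

lemma suppFn_smul {A : Set E} (hA : IsBody A) {r : ℝ} (hr : 0 < r) (x : E) :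
    suppFn (r • A) x = r * suppFn A x := by
  have hs : IsCompact (r • A) := (isBody_smul hA r).1
  apply le_antisymm
  · apply suppFn_le hA.2.2.smul_set
    rintro y hy
    rcases Set.mem_smul_set.1 hy with ⟨a, ha, rfl⟩
    rw [real_inner_smul_left]
    exact mul_le_mul_of_nonneg_left (le_suppFn hA.1 ha x) hr.le
  · rw [mul_comm, ← le_div_iff₀ hr]
    apply suppFn_le hA.2.2
    intro a ha
    rw [le_div_iff₀ hr]
    have h3 := le_suppFn hs (Set.smul_mem_smul_set ha (a := r)) x
    rw [real_inner_smul_left] at h3; linarith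

lemma suppFn_singleton (v x : E) : suppFn ({v} : Set E) x = ⟪v, x⟫ := by
  unfold suppFn
  rw [Set.image_singleton, csSup_singleton]

lemma suppFn_zero {A : Set E} (hA : A.Nonempty) : suppFn A 0 = 0 := by
  unfold suppFn
  have h : (fun y : E => ⟪y, (0 : E)⟫) '' A = {(0 : ℝ)} := by
    have h2 : (fun y : E => ⟪y, (0 : E)⟫) = fun _ => (0 : ℝ) := by
      funext y; simp
    rw [h2, Set.Nonempty.image_const hA]
  rw [h, csSup_singleton]

lemma sublinear_suppFn {A : Set E} (hA : IsBody A) : Sublinear (suppFn A) := by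
  constructor
  · intro c hc x
    rcases eq_or_lt_of_le hc with h | h
    · rw [← h, zero_smul, suppFn_zero hA.2.2, zero_mul]
    · apply le_antisymm
      · apply suppFn_le hA.2.2
        intro y hy
        rw [real_inner_smul_right]
        exact mul_le_mul_of_nonneg_left (le_suppFn hA.1 hy x) hc
      · rw [mul_comm, ← le_div_iff₀ h]
        apply suppFn_le hA.2.2
        intro y hy
        rw [le_div_iff₀ h]
        have h3 := le_suppFn hA.1 hy (c • x)
        rw [real_inner_smul_right] at h3; linarith
  · refine ⟨convex_univ, ?_⟩
    intro x _ y _ a b ha hb _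
    apply suppFn_le hA.2.2
    intro z hz
    rw [inner_add_right, real_inner_smul_right, real_inner_smul_right]
    have h1 := le_suppFn hA.1 hz x
    have h2 := le_suppFn hA.1 hz y
    have := mul_le_mul_of_nonneg_left h1 ha
    have := mul_le_mul_of_nonneg_left h2 hb
    simp only [smul_eq_mul]
    linarith

lemma zero_mem_polar (K : Set E) : (0 : E) ∈ polarBody K := by
  intro x _; simp

lemma isBody_polar {K : Set E} (hK : IsBody K) (h0 : 0 ∈ interior K) :
    IsBody (polarBody K) := by
  obtain ⟨δ, hδ, hball⟩ : ∃ δ > 0, Metric.ball (0 : E) δ ⊆ K := by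
    rcases Metric.mem_nhds_iff.1 (mem_interior_iff_mem_nhds.1 h0) with ⟨δ, hδ, h⟩
    exact ⟨δ, hδ, h⟩
  have hbdd : polarBody K ⊆ Metric.closedBall (0 : E) (2 / δ) := by
    intro y hy
    rw [Metric.mem_closedBall, dist_zero_right]
    by_cases hy0 : y = 0
    · rw [hy0, norm_zero]; positivity
    · have hny : 0 < ‖y‖ := norm_pos_iff.2 hy0
      have hxK : ((δ / 2) * ‖y‖⁻¹) • y ∈ K := by
        apply hball
        rw [Metric.mem_ball, dist_zero_right, norm_smul]
        rw [Real.norm_eq_abs, abs_of_pos (by positivity)]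
        rw [mul_assoc, inv_mul_cancel₀ hny.ne', mul_one]
        linarith
      have h1 := hy _ hxK
      rw [real_inner_smul_left, real_inner_self_eq_norm_mul_norm] at h1
      have e : ‖y‖⁻¹ * (‖y‖ * ‖y‖) = ‖y‖ := by field_simp
      rw [mul_assoc, e] at h1
      rw [le_div_iff₀ hδ]
      nlinarith
  have hclosed : IsClosed (polarBody K) := by
    have h2 : polarBody K = ⋂ x ∈ K, {y : E | ⟪x, y⟫ ≤ 1} := by
      ext y; simp [polarBody]
    rw [h2]
    exact isClosed_biInter fun x _ =>
      isClosed_le (continuous_const.inner continuous_id) continuous_const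
  refine ⟨?_, ?_, ⟨0, zero_mem_polar K⟩⟩
  · exact (isCompact_closedBall (0 : E) (2 / δ)).of_isClosed_subset hclosed hbdd
  · intro y₁ h₁ y₂ h₂ a b ha hb hab
    intro x hx
    rw [inner_add_right, real_inner_smul_right, real_inner_smul_right]
    have := h₁ x hx
    have := h₂ x hx
    nlinarith

lemma inner_le_gauge {K : Set E} (hK : IsBody K) (h0 : 0 ∈ interior K)
    {y : E} (hy : y ∈ polarBody K) (x : E) : ⟪y, x⟫ ≤ gauge K x := by
  obtain ⟨δ, hδ, hball⟩ : ∃ δ > 0, Metric.ball (0 : E) δ ⊆ K := by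
    rcases Metric.mem_nhds_iff.1 (mem_interior_iff_mem_nhds.1 h0) with ⟨δ, hδ, h⟩
    exact ⟨δ, hδ, h⟩
  have hne : {r : ℝ | 0 < r ∧ x ∈ r • K}.Nonempty := by
    set r₀ : ℝ := ‖x‖ / δ + 1 with hr₀def
    have hr₀ : 0 < r₀ := by positivity
    refine ⟨r₀, hr₀, ?_⟩
    rw [Set.mem_smul_set_iff_inv_smul_mem₀ hr₀.ne']
    apply hball
    rw [Metric.mem_ball, dist_zero_right, norm_smul, Real.norm_eq_abs,
      abs_of_pos (by positivity : (0:ℝ) < r₀⁻¹)]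
    rw [inv_mul_lt_iff₀ hr₀, hr₀def]
    have : ‖x‖ / δ * δ = ‖x‖ := by field_simp
    nlinarith [norm_nonneg x]
  rw [gauge]
  apply le_csInf hne
  rintro r ⟨hr, hxr⟩
  rcases Set.mem_smul_set.1 hxr with ⟨k, hk, rfl⟩
  rw [real_inner_smul_right]
  have h1 := hy k hk
  rw [real_inner_comm] at h1
  nlinarith

lemma gauge_eq_suppFn_polar {K : Set E} (hK : IsBody K) (h0 : 0 ∈ interior K) :
    gauge K = suppFn (polarBody K) := by
  have hpol := isBody_polar hK h0
  funext x
  apply le_antisymm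
  · by_contra h
    push_neg at h
    set t := suppFn (polarBody K) x with ht
    have ht0 : 0 ≤ t := by
      have := le_suppFn hpol.1 (zero_mem_polar K) x
      simpa using this
    obtain ⟨s, hts, hs⟩ := exists_between h
    have hs0 : 0 < s := lt_of_le_of_lt ht0 hts
    have hx' : s⁻¹ • x ∉ K := by
      intro h'
      have hmem : x ∈ s • K := by
        rw [Set.mem_smul_set_iff_inv_smul_mem₀ hs0.ne']
        exact h'
      exact absurd (gauge_le_of_mem hs0.le hmem) (not_le.2 hs)
    obtain ⟨f, u, hfa, hfx⟩ :=
      geometric_hahn_banach_closed_point hK.2.1 hK.1.isClosed hx'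
    have hu : 0 < u := by
      have := hfa 0 (interior_subset h0)
      simpa using this
    set w : E := (InnerProductSpace.toDual ℝ _).symm f with hwdef
    have hw : ∀ z : E, ⟪w, z⟫ = f z := fun z => InnerProductSpace.toDual_symm_apply
    have hyK : u⁻¹ • w ∈ polarBody K := by
      intro z hz
      rw [real_inner_comm, real_inner_smul_left, hw]
      have := (hfa z hz).le
      rw [inv_mul_le_iff₀ hu]
      linarith
    have h1 : ⟪u⁻¹ • w, x⟫ ≤ t := le_suppFn hpol.1 hyK x
    rw [real_inner_smul_left, hw] at h1
    have h2 : u < s⁻¹ * f x := by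
      have := hfx
      rwa [map_smul, smul_eq_mul] at this
    have h3 : s * u < f x := by
      have h6 := mul_lt_mul_of_pos_left h2 hs0
      rw [← mul_assoc, mul_inv_cancel₀ hs0.ne', one_mul] at h6
      nlinarith
    have h6 : u⁻¹ * (s * u) < u⁻¹ * f x := mul_lt_mul_of_pos_left h3 (by positivity)
    have h7 : u⁻¹ * (s * u) = s := by field_simp
    linarith
  · apply suppFn_le hpol.2.2
    intro y hy
    exact inner_le_gauge hK h0 hy x

lemma suppFn_inj {A B : Set E} (hA : IsBody A) (hB : IsBody B)
    (h : suppFn A = suppFn B) : A = B := by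
  have key : ∀ {A B : Set E}, IsBody A → IsBody B → suppFn A = suppFn B → A ⊆ B := by
    intro A B hA hB h a ha
    by_contra hab
    obtain ⟨f, u, hfb, hfa⟩ :=
      geometric_hahn_banach_closed_point hB.2.1 hB.1.isClosed hab
    set w : E := (InnerProductSpace.toDual ℝ _).symm f with hwdef
    have hw : ∀ z : E, ⟪w, z⟫ = f z := fun z => InnerProductSpace.toDual_symm_apply
    have h1 : suppFn B w ≤ u := by
      apply suppFn_le hB.2.2
      intro b hb
      rw [real_inner_comm, hw]
      exact (hfb b hb).le
    have h2 : u < suppFn A w := by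
      have := le_suppFn hA.1 ha w
      rw [real_inner_comm, hw] at this
      linarith [hfa]
    rw [h] at h2
    linarith
  exact Set.Subset.antisymm (key hA hB h) (key hB hA h.symm)

lemma sublinear_zero_eq {f : E → ℝ} (hf : Sublinear f) : f 0 = 0 := by
  have := hf.1 0 le_rfl 0
  simpa using this

lemma sublinear_add_le {f : E → ℝ} (hf : Sublinear f) (x y : E) :
    f (x + y) ≤ f x + f y := by
  have h1 := hf.2.2 (Set.mem_univ x) (Set.mem_univ y)
    (by norm_num : (0:ℝ) ≤ 1/2) (by norm_num : (0:ℝ) ≤ 1/2) (by norm_num)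
  have h2 : (2 : ℝ) • ((1/2 : ℝ) • x + (1/2 : ℝ) • y) = x + y := by
    rw [smul_add, smul_smul, smul_smul]; norm_num
  have h3 := hf.1 2 (by norm_num) ((1/2 : ℝ) • x + (1/2 : ℝ) • y)
  rw [h2] at h3
  simp only [smul_eq_mul] at h1
  linarith

lemma sublinear_addf {f g : E → ℝ} (hf : Sublinear f) (hg : Sublinear g) :
    Sublinear (fun x => f x + g x) :=
  ⟨fun c hc x => by show f (c • x) + g (c • x) = c * (f x + g x); rw [hf.1 c hc, hg.1 c hc]; ring,
    hf.2.add hg.2⟩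

lemma sublinear_smulf {f : E → ℝ} (hf : Sublinear f) {c : ℝ} (hc : 0 ≤ c) :
    Sublinear (fun x => c * f x) := by
  refine ⟨fun d hd x => by show c * f (d • x) = d * (c * f x); rw [hf.1 d hd]; ring, ?_⟩
  have := hf.2.smul hc
  simpa [smul_eq_mul] using this

lemma sublinear_inner (v : E) : Sublinear (fun x : E => ⟪v, x⟫) := by
  refine ⟨fun c hc x => real_inner_smul_right v x c, convex_univ, ?_⟩
  intro x _ y _ a b _ _ _
  show ⟪v, a • x + b • y⟫ ≤ a • ⟪v, x⟫ + b • ⟪v, y⟫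
  rw [inner_add_right, real_inner_smul_right, real_inner_smul_right]
  simp [smul_eq_mul]

lemma exists_body_suppFn {f : E → ℝ} (hf : Sublinear f) :
    ∃ L : Set E, IsBody L ∧ suppFn L = f := by
  classical
  set C : Set E := {y : E | ∀ x, ⟪y, x⟫ ≤ f x} with hCdef
  have main : ∀ x₀ : E, x₀ ≠ 0 → ∃ y ∈ C, f x₀ ≤ ⟪y, x₀⟫ := by
    intro x₀ hx₀
    have hpmap : ∀ c : ℝ, c • x₀ = 0 → c • f x₀ = (0 : ℝ) := by
      intro c hc
      rcases smul_eq_zero.1 hc with h | h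
      · rw [h, zero_smul]
      · exact absurd h hx₀
    set p := LinearPMap.mkSpanSingleton' (σ := RingHom.id ℝ) x₀ (f x₀) hpmap with hpdef
    have hdom : ∀ z : p.domain, p z ≤ f z := by
      rintro ⟨z, hz⟩
      have hz' : z ∈ Submodule.span ℝ {x₀} := hz
      obtain ⟨c, rfl⟩ := Submodule.mem_span_singleton.1 hz'
      rw [LinearPMap.mkSpanSingleton'_apply, RingHom.id_apply]
      rcases le_or_gt 0 c with hc | hc
      · rw [hf.1 c hc x₀, smul_eq_mul]
      · have h1 : f (c • x₀) = (-c) * f (-x₀) := by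
          rw [show c • x₀ = (-c) • (-x₀) by rw [smul_neg, neg_smul, neg_neg],
            hf.1 (-c) (by linarith)]
        have h2 : 0 ≤ f x₀ + f (-x₀) := by
          have := sublinear_add_le hf x₀ (-x₀)
          rw [add_neg_cancel, sublinear_zero_eq hf] at this
          linarith
        rw [smul_eq_mul, h1]
        nlinarith
    obtain ⟨g, hg1, hg2⟩ := exists_extension_of_le_sublinear p f
      (fun c hc x => hf.1 c hc.le x) (sublinear_add_le hf) hdom
    set G := LinearMap.toContinuousLinearMap g with hGdef
    set w : E := (InnerProductSpace.toDual ℝ _).symm G with hwdef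
    have hw : ∀ z : E, ⟪w, z⟫ = g z := fun z => InnerProductSpace.toDual_symm_apply
    have hx₀mem : x₀ ∈ p.domain := by
      show x₀ ∈ (LinearPMap.mkSpanSingleton' x₀ (f x₀) hpmap).domain
      rw [LinearPMap.domain_mkSpanSingleton]
      exact Submodule.mem_span_singleton_self x₀
    refine ⟨w, fun x => by rw [hw]; exact hg2 x, ?_⟩
    have h5 := hg1 ⟨x₀, hx₀mem⟩
    have h6 : p ⟨x₀, hx₀mem⟩ = f x₀ := LinearPMap.mkSpanSingleton'_apply_self _ _ _ _
    rw [hw x₀]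
    rw [show g x₀ = p ⟨x₀, hx₀mem⟩ from h5, h6]
  have hCne : C.Nonempty := by
    by_cases hE : ∃ x : E, x ≠ 0
    · obtain ⟨x₁, hx₁⟩ := hE
      obtain ⟨y, hy, -⟩ := main x₁ hx₁
      exact ⟨y, hy⟩
    · push_neg at hE
      refine ⟨0, fun x => ?_⟩
      rw [hE x, sublinear_zero_eq hf, inner_zero_right]
  have key : ∀ x₀ : E, ∃ y ∈ C, f x₀ ≤ ⟪y, x₀⟫ := by
    intro x₀
    by_cases hx₀ : x₀ = 0
    · subst hx₀
      obtain ⟨y, hy⟩ := hCne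
      exact ⟨y, hy, by rw [sublinear_zero_eq hf, inner_zero_right]⟩
    · exact main x₀ hx₀
  -- continuity and boundedness
  have hcont : Continuous f := by
    have := hf.2.continuousOn isOpen_univ
    rwa [continuousOn_univ] at this
  obtain ⟨z, hz, hzmax⟩ := (isCompact_closedBall (0 : E) 1).exists_isMaxOn
    ⟨0, Metric.mem_closedBall_self zero_le_one⟩ hcont.continuousOn
  set Cb : ℝ := max (f z) 0 with hCb
  have hub : ∀ u : E, ‖u‖ ≤ 1 → f u ≤ Cb := by
    intro u hu
    have := hzmax (Metric.mem_closedBall.2 (by simpa [dist_zero_right] using hu))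
    exact le_trans this (le_max_left _ _)
  have hbddC : C ⊆ Metric.closedBall (0 : E) Cb := by
    intro y hy
    rw [Metric.mem_closedBall, dist_zero_right]
    by_cases hy0 : y = 0
    · rw [hy0, norm_zero]; exact le_max_right _ _
    · have hny : 0 < ‖y‖ := norm_pos_iff.2 hy0
      have h1 := hy (‖y‖⁻¹ • y)
      rw [real_inner_smul_right, real_inner_self_eq_norm_mul_norm] at h1
      have h2 : ‖y‖⁻¹ * (‖y‖ * ‖y‖) = ‖y‖ := by field_simp
      rw [h2] at h1
      refine h1.trans (hub _ ?_)
      rw [norm_smul, Real.norm_eq_abs, abs_of_pos (by positivity), inv_mul_cancel₀ hny.ne']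
  have hclosed : IsClosed C := by
    have h2 : C = ⋂ x : E, {y : E | ⟪y, x⟫ ≤ f x} := by ext y; simp [hCdef]
    rw [h2]
    exact isClosed_iInter fun x => isClosed_le (inner_right_cont x) continuous_const
  have hconv : Convex ℝ C := by
    intro y₁ h₁ y₂ h₂ a b ha hb hab
    intro x
    rw [inner_add_left, real_inner_smul_left, real_inner_smul_left]
    have h5 : a * ⟪y₁, x⟫ ≤ a * f x := mul_le_mul_of_nonneg_left (h₁ x) ha
    have h6 : b * ⟪y₂, x⟫ ≤ b * f x := mul_le_mul_of_nonneg_left (h₂ x) hb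
    have h7 : a * f x + b * f x = f x := by rw [← add_mul, hab, one_mul]
    linarith
  have hbody : IsBody C :=
    ⟨(isCompact_closedBall (0 : E) Cb).of_isClosed_subset hclosed hbddC, hconv, hCne⟩
  refine ⟨C, hbody, ?_⟩
  funext x
  apply le_antisymm
  · exact suppFn_le hCne fun y hy => hy x
  · obtain ⟨y, hy, hyx⟩ := key x
    exact hyx.trans (le_suppFn hbody.1 hy x)

lemma smul_set_add' (r : ℝ) (A B : Set E) : r • (A + B) = r • A + r • B := by
  ext z
  constructor
  · rintro ⟨w, hw, rfl⟩
    rcases Set.mem_add.1 hw with ⟨a, ha, b, hb, rfl⟩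
    simpa [smul_add] using
      Set.add_mem_add (Set.smul_mem_smul_set ha (a := r)) (Set.smul_mem_smul_set hb (a := r))
  · rintro hz
    rcases Set.mem_add.1 hz with ⟨a', ⟨a, ha, rfl⟩, b', ⟨b, hb, rfl⟩, rfl⟩
    exact ⟨a + b, Set.add_mem_add ha hb, by show r • (a + b) = r • a + r • b; rw [smul_add]⟩

end Stmt3Aux

open Stmt3Aux in
/-- For a convex body `K` with `0 ∈ int K`, the linear span of the support functions of the
convex bodies homothetic to Minkowski summands of the polar body `K°` equals the space
`L±(‖·‖_K) = {g | ∃ ε > 0 : ‖·‖_K + ε g and ‖·‖_K - ε g are sublinear}`. -/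
theorem stmt3 {n : ℕ} (K : Set (EuclideanSpace ℝ (Fin n)))
    (hK : IsBody K) (h0 : 0 ∈ interior K) :
    (Submodule.span ℝ ((fun L => suppFn L) '' {L | InSummandCone (polarBody K) L}) :
        Set (EuclideanSpace ℝ (Fin n) → ℝ)) =
      {g | ∃ ε > (0 : ℝ), Sublinear (fun x => gauge K x + ε * g x) ∧
        Sublinear (fun x => gauge K x - ε * g x)} := by
  have hpol : IsBody (polarBody K) := isBody_polar hK h0
  have hdual : gauge K = suppFn (polarBody K) := gauge_eq_suppFn_polar hK h0
  have hsubg : Sublinear (gauge K) := hdual ▸ sublinear_suppFn hpol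
  ext g
  simp only [SetLike.mem_coe, Set.mem_setOf_eq]
  constructor
  · intro hg
    induction hg using Submodule.span_induction with
    | mem f hf =>
      rcases hf with ⟨L, hL, rfl⟩
      obtain ⟨hLbody, r, hr, v, M, hM, hQ⟩ := hL
      have hform : ∀ x, gauge K x = r * suppFn L x + ⟪v, x⟫ + suppFn M x := by
        intro x
        rw [hdual, hQ,
          suppFn_add (isBody_add (isBody_smul hLbody r) (isBody_singleton v)) hM,
          suppFn_add (isBody_smul hLbody r) (isBody_singleton v),
          suppFn_smul hLbody hr, suppFn_singleton]
      refine ⟨r / 2, by positivity, ?_, ?_⟩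
      · have he : (fun x => gauge K x + r / 2 * suppFn L x) =
            fun x => ((r + r / 2) * suppFn L x + ⟪v, x⟫) + suppFn M x := by
          funext x; rw [hform x]; ring
        rw [he]
        exact sublinear_addf
          (sublinear_addf (sublinear_smulf (sublinear_suppFn hLbody) (by positivity))
            (sublinear_inner v)) (sublinear_suppFn hM)
      · have he : (fun x => gauge K x - r / 2 * suppFn L x) =
            fun x => ((r - r / 2) * suppFn L x + ⟪v, x⟫) + suppFn M x := by
          funext x; rw [hform x]; ring
        rw [he]
        exact sublinear_addf
          (sublinear_addf (sublinear_smulf (sublinear_suppFn hLbody) (by linarith))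
            (sublinear_inner v)) (sublinear_suppFn hM)
    | zero =>
      refine ⟨1, one_pos, ?_, ?_⟩
      · simp only [Pi.zero_apply, mul_zero, add_zero]
        exact hsubg
      · simp only [Pi.zero_apply, mul_zero, sub_zero]
        exact hsubg
    | add g₁ g₂ hg₁ hg₂ ih₁ ih₂ =>
      obtain ⟨ε₁, hε₁, h1p, h1m⟩ := ih₁
      obtain ⟨ε₂, hε₂, h2p, h2m⟩ := ih₂
      have hsum : (0:ℝ) < ε₁ + ε₂ := by linarith
      set ε : ℝ := ε₁ * ε₂ / (2 * (ε₁ + ε₂)) with hεdef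
      have hε : 0 < ε := by positivity
      refine ⟨ε, hε, ?_, ?_⟩
      · have he : (fun x => gauge K x + ε * (g₁ + g₂) x) =
            fun x => ((ε / ε₁) * (gauge K x + ε₁ * g₁ x) +
              (ε / ε₂) * (gauge K x + ε₂ * g₂ x)) + (1/2) * gauge K x := by
          funext x
          simp only [Pi.add_apply, hεdef]
          field_simp
          ring
        rw [he]
        exact sublinear_addf
          (sublinear_addf (sublinear_smulf h1p (by positivity))
            (sublinear_smulf h2p (by positivity)))
          (sublinear_smulf hsubg (by norm_num))
      · have he : (fun x => gauge K x - ε * (g₁ + g₂) x) =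
            fun x => ((ε / ε₁) * (gauge K x - ε₁ * g₁ x) +
              (ε / ε₂) * (gauge K x - ε₂ * g₂ x)) + (1/2) * gauge K x := by
          funext x
          simp only [Pi.add_apply, hεdef]
          field_simp
          ring
        rw [he]
        exact sublinear_addf
          (sublinear_addf (sublinear_smulf h1m (by positivity))
            (sublinear_smulf h2m (by positivity)))
          (sublinear_smulf hsubg (by norm_num))
    | smul c g' hg' ih =>
      obtain ⟨ε, hε, hp, hm⟩ := ih
      rcases lt_trichotomy c 0 with hc | hc | hc
      · refine ⟨ε / (-c), div_pos hε (by linarith), ?_, ?_⟩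
        · have he : (fun x => gauge K x + ε / (-c) * (c • g') x) =
              fun x => gauge K x - ε * g' x := by
            funext x
            simp only [Pi.smul_apply, smul_eq_mul]
            have hc' : c ≠ 0 := hc.ne
            have key : ε / (-c) * (c * g' x) = -(ε * g' x) := by
              rw [div_mul_eq_mul_div, div_eq_iff (neg_ne_zero.2 hc')]; ring
            rw [key]; ring
          rw [he]; exact hm
        · have he : (fun x => gauge K x - ε / (-c) * (c • g') x) =
              fun x => gauge K x + ε * g' x := by
            funext x
            simp only [Pi.smul_apply, smul_eq_mul]
            have hc' : c ≠ 0 := hc.ne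
            have key : ε / (-c) * (c * g' x) = -(ε * g' x) := by
              rw [div_mul_eq_mul_div, div_eq_iff (neg_ne_zero.2 hc')]; ring
            rw [key]; ring
          rw [he]; exact hp
      · subst hc
        refine ⟨1, one_pos, ?_, ?_⟩
        · simp only [zero_smul, Pi.zero_apply, mul_zero, add_zero]
          exact hsubg
        · simp only [zero_smul, Pi.zero_apply, mul_zero, sub_zero]
          exact hsubg
      · refine ⟨ε / c, by positivity, ?_, ?_⟩
        · have he : (fun x => gauge K x + ε / c * (c • g') x) =
              fun x => gauge K x + ε * g' x := by
            funext x
            simp only [Pi.smul_apply, smul_eq_mul]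
            have hc' : c ≠ 0 := hc.ne'
            have key : ε / c * (c * g' x) = ε * g' x := by
              rw [div_mul_eq_mul_div, div_eq_iff hc']; ring
            rw [key]
          rw [he]; exact hp
        · have he : (fun x => gauge K x - ε / c * (c • g') x) =
              fun x => gauge K x - ε * g' x := by
            funext x
            simp only [Pi.smul_apply, smul_eq_mul]
            have hc' : c ≠ 0 := hc.ne'
            have key : ε / c * (c * g' x) = ε * g' x := by
              rw [div_mul_eq_mul_div, div_eq_iff hc']; ring
            rw [key]
          rw [he]; exact hm
  · rintro ⟨ε, hε, hp, hm⟩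
    obtain ⟨L₁, hL₁, hs₁⟩ := exists_body_suppFn hp
    obtain ⟨L₂, hL₂, hs₂⟩ := exists_body_suppFn hm
    have hsum : suppFn (L₁ + L₂) = suppFn ((2:ℝ) • polarBody K) := by
      funext x
      have e₁ : suppFn L₁ x = gauge K x + ε * g x := congrFun hs₁ x
      have e₂ : suppFn L₂ x = gauge K x - ε * g x := congrFun hs₂ x
      have hd : gauge K x = suppFn (polarBody K) x := congrFun hdual x
      rw [suppFn_add hL₁ hL₂ x, suppFn_smul hpol two_pos x, e₁, e₂, ← hd]
      ring
    have hL12 : L₁ + L₂ = (2:ℝ) • polarBody K :=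
      suppFn_inj (isBody_add hL₁ hL₂) (isBody_smul hpol 2) hsum
    have hhalf : polarBody K = (1/2 : ℝ) • L₁ + (1/2 : ℝ) • L₂ := by
      have h1 : (1/2 : ℝ) • (L₁ + L₂) = (1/2 : ℝ) • ((2:ℝ) • polarBody K) := by
        rw [hL12]
      rw [smul_set_add'] at h1
      have h2 : (1/2 : ℝ) • ((2:ℝ) • polarBody K) = polarBody K := by
        rw [smul_smul]
        norm_num
      rw [h2] at h1
      exact h1.symm
    have hmemgen : ∀ A B : Set (EuclideanSpace ℝ (Fin n)), IsBody A → IsBody B →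
        polarBody K = (1/2:ℝ) • A + (1/2:ℝ) • B → InSummandCone (polarBody K) A := by
      intro A B hA hB hEq
      refine ⟨hA, 1/2, by norm_num, 0, (1/2:ℝ) • B, isBody_smul hB _, ?_⟩
      rw [hEq]
      congr 1
      rw [Set.add_singleton]
      simp
    have hmem₁ : InSummandCone (polarBody K) L₁ := hmemgen L₁ L₂ hL₁ hL₂ hhalf
    have hmem₂ : InSummandCone (polarBody K) L₂ :=
      hmemgen L₂ L₁ hL₂ hL₁ (by rw [hhalf, add_comm])
    have hgeq : g = (2*ε)⁻¹ • suppFn L₁ - (2*ε)⁻¹ • suppFn L₂ := by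
      funext x
      have e₁ : suppFn L₁ x = gauge K x + ε * g x := congrFun hs₁ x
      have e₂ : suppFn L₂ x = gauge K x - ε * g x := congrFun hs₂ x
      simp only [Pi.sub_apply, Pi.smul_apply, smul_eq_mul, e₁, e₂]
      field_simp
      ring
    rw [hgeq]
    exact Submodule.sub_mem _
      (Submodule.smul_mem _ _ (Submodule.subset_span ⟨L₁, hmem₁, rfl⟩))
      (Submodule.smul_mem _ _ (Submodule.subset_span ⟨L₂, hmem₂, rfl⟩))
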